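/- arXiv:math/0606327 — 2 statements merged into one kernel-verified Lean document; each statement's English description precedes it below -/
import Mathlib

section
/- With the block operator a as above, if a ≥ 0, a₊ and a₋ are trace class, and t is Hilbert–Schmidt, then the Hilbert–Schmidt norm of t satisfies ‖t‖₂ ≤ (Tr a)/√2. -/
/-!
Positivity of `a` makes `(u, v) ↦ ⟪u, a v⟫` a positive semidefinite sesquilinear form, so by
Cauchy–Schwarz applied to `(ξ, 0)` and `(0, η)` we get `|⟪ξ, t η⟫|² ≤ ⟪ξ, a₊ ξ⟫ ⟪η, a₋ η⟫`.
Expanding `‖t f_j‖²` by Parseval in a basis `(e_i)` of `H₊` and summing over a basis `(f_j)` of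
`H₋` gives `‖t‖₂² ≤ Tr a₊ · Tr a₋ ≤ (Tr a)² / 4`.
-/

open ContinuousLinearMap

noncomputable section

/-- The block operator `[[A, B], [C, D]]` on the Hilbert space `H₊ ⊕ H₋` (here `WithLp 2 (E × F)`),
acting by `(ξ, η) ↦ (A ξ + B η, C ξ + D η)`. -/
def blockOp {E F : Type*} [NormedAddCommGroup E] [InnerProductSpace ℂ E]
    [NormedAddCommGroup F] [InnerProductSpace ℂ F]
    (A : E →L[ℂ] E) (B : F →L[ℂ] E) (C : E →L[ℂ] F) (D : F →L[ℂ] F) :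
    WithLp 2 (E × F) →L[ℂ] WithLp 2 (E × F) :=
  ((WithLp.prodContinuousLinearEquiv 2 ℂ E F).symm : E × F →L[ℂ] WithLp 2 (E × F)) ∘L
    ((A.coprod B).prod (C.coprod D)) ∘L
    ((WithLp.prodContinuousLinearEquiv 2 ℂ E F) : WithLp 2 (E × F) →L[ℂ] E × F)

namespace ContinuousLinearMap

variable {𝕜 G : Type*} [RCLike 𝕜] [NormedAddCommGroup G] [InnerProductSpace 𝕜 G]

abbrev IsPositive.preInnerProductSpaceCore {T : G →L[𝕜] G} (hT : T.IsPositive) :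
    PreInnerProductSpace.Core 𝕜 G where
  inner x y := inner 𝕜 x (T y)
  conj_inner_symm x y := by rw [inner_conj_symm, hT.inner_left_eq_inner_right]
  re_inner_nonneg x := hT.re_inner_nonneg_right x
  add_left _ _ _ := inner_add_left _ _ _
  smul_left _ _ _ := inner_smul_left _ _ _

theorem IsPositive.norm_inner_sq_le {T : G →L[𝕜] G} (hT : T.IsPositive) (x y : G) :
    ‖inner 𝕜 x (T y)‖ ^ 2 ≤ RCLike.re (inner 𝕜 x (T x)) * RCLike.re (inner 𝕜 y (T y)) := by
  have h := @InnerProductSpace.Core.inner_mul_inner_self_le 𝕜 G _ _ _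
    hT.preInnerProductSpaceCore x y
  change ‖inner 𝕜 x (T y)‖ * ‖inner 𝕜 y (T x)‖ ≤
    RCLike.re (inner 𝕜 x (T x)) * RCLike.re (inner 𝕜 y (T y)) at h
  rwa [← hT.inner_left_eq_inner_right y, norm_inner_symm (T y), ← sq] at h

end ContinuousLinearMap

section blockOp

variable {E F : Type*} [NormedAddCommGroup E] [InnerProductSpace ℂ E]
    [NormedAddCommGroup F] [InnerProductSpace ℂ F]
    {A : E →L[ℂ] E} {B : F →L[ℂ] E} {C : E →L[ℂ] F} {D : F →L[ℂ] F}

theorem blockOp_toLp (ξ : E) (η : F) :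
    blockOp A B C D (WithLp.toLp 2 (ξ, η)) = WithLp.toLp 2 (A ξ + B η, C ξ + D η) := rfl

namespace ContinuousLinearMap.IsPositive

theorem of_blockOp_fst (ha : (blockOp A B C D).IsPositive) : A.IsPositive := by
  refine ⟨fun ξ ξ' => ?_, fun ξ => ?_⟩
  · have h := ha.inner_left_eq_inner_right (WithLp.toLp 2 (ξ, 0)) (WithLp.toLp 2 (ξ', 0))
    simpa [blockOp_toLp, WithLp.prod_inner_apply] using h
  · have h := ha.re_inner_nonneg_right (WithLp.toLp 2 (ξ, 0))
    simpa [blockOp_toLp, reApplyInnerSelf, inner_re_symm (A ξ)] using h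

theorem of_blockOp_snd (ha : (blockOp A B C D).IsPositive) : D.IsPositive := by
  refine ⟨fun η η' => ?_, fun η => ?_⟩
  · have h := ha.inner_left_eq_inner_right (WithLp.toLp 2 (0, η)) (WithLp.toLp 2 (0, η'))
    simpa [blockOp_toLp, WithLp.prod_inner_apply] using h
  · have h := ha.re_inner_nonneg_right (WithLp.toLp 2 (0, η))
    simpa [blockOp_toLp, reApplyInnerSelf, inner_re_symm (D η)] using h

theorem norm_inner_blockOp_sq_le (ha : (blockOp A B C D).IsPositive) (ξ : E) (η : F) :
    ‖inner ℂ ξ (B η)‖ ^ 2 ≤ (inner ℂ ξ (A ξ)).re * (inner ℂ η (D η)).re := by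
  simpa [blockOp_toLp] using
    ha.norm_inner_sq_le (WithLp.toLp 2 (ξ, 0)) (WithLp.toLp 2 (0, η))

end ContinuousLinearMap.IsPositive

end blockOp

namespace HilbertBasis

variable {𝕜 E ι κ : Type*} [RCLike 𝕜] [NormedAddCommGroup E] [InnerProductSpace 𝕜 E]

theorem hasSum_norm_inner_sq (b : HilbertBasis ι 𝕜 E) (x : E) :
    HasSum (fun i => ‖inner 𝕜 (b i) x‖ ^ 2) (‖x‖ ^ 2) := by
  simpa [b.repr_apply_apply] using lp.hasSum_norm (p := 2) (by norm_num) (b.repr x)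

theorem tsum_norm_sq_le_tsum_mul_tsum (b : HilbertBasis ι 𝕜 E) (v : κ → E) {α : ι → ℝ}
    {β : κ → ℝ} (hα : Summable α) (hβ : Summable β)
    (h : ∀ i j, ‖inner 𝕜 (b i) (v j)‖ ^ 2 ≤ α i * β j) :
    ∑' j, ‖v j‖ ^ 2 ≤ (∑' i, α i) * ∑' j, β j := by
  have hcol : ∀ j, ‖v j‖ ^ 2 ≤ (∑' i, α i) * β j := fun j => by
    rw [← (b.hasSum_norm_inner_sq (v j)).tsum_eq, ← tsum_mul_right]
    exact (b.hasSum_norm_inner_sq (v j)).summable.tsum_le_tsum (h · j) (hα.mul_right _)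
  rw [← tsum_mul_left]
  exact ((hβ.mul_left _).of_nonneg_of_le (fun _ => sq_nonneg _) hcol).tsum_le_tsum hcol
    (hβ.mul_left _)

end HilbertBasis

theorem Real.sqrt_le_add_div_sqrt_two_of_le_mul {s p q : ℝ} (hp : 0 ≤ p) (hq : 0 ≤ q)
    (h : s ≤ p * q) : √s ≤ (p + q) / √2 := by
  rw [le_div_iff₀ (by positivity), ← Real.sqrt_mul' _ zero_le_two]
  refine Real.sqrt_le_iff.mpr ⟨by positivity, ?_⟩
  nlinarith [sq_nonneg (p - q)]

theorem stmt1_general {E F : Type*} [NormedAddCommGroup E] [InnerProductSpace ℂ E] [CompleteSpace E]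
    [NormedAddCommGroup F] [InnerProductSpace ℂ F] [CompleteSpace F]
    {ιE ιF : Type*} (bE : HilbertBasis ιE ℂ E) (bF : HilbertBasis ιF ℂ F)
    (apos : E →L[ℂ] E) (aneg : F →L[ℂ] F) (t : F →L[ℂ] E)
    (ha : (blockOp apos t (adjoint t) aneg).IsPositive)
    (htrp : Summable fun i => (inner ℂ (bE i) (apos (bE i)) : ℂ).re)
    (htrn : Summable fun j => (inner ℂ (bF j) (aneg (bF j)) : ℂ).re) :
    Real.sqrt (∑' j, ‖t (bF j)‖ ^ 2) ≤
      ((∑' i, (inner ℂ (bE i) (apos (bE i)) : ℂ).re) +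
        ∑' j, (inner ℂ (bF j) (aneg (bF j)) : ℂ).re) / Real.sqrt 2 := by
  refine Real.sqrt_le_add_div_sqrt_two_of_le_mul
    (tsum_nonneg fun i => ha.of_blockOp_fst.re_inner_nonneg_right (bE i))
    (tsum_nonneg fun j => ha.of_blockOp_snd.re_inner_nonneg_right (bF j)) ?_
  exact bE.tsum_norm_sq_le_tsum_mul_tsum (fun j => t (bF j)) htrp htrn
    fun i j => ha.norm_inner_blockOp_sq_le (bE i) (bF j)

/-- If the block operator `a = [[a₊, t], [t*, a₋]]` is positive, with `a₊, a₋` trace class and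
`t` Hilbert–Schmidt, then `‖t‖₂ ≤ (Tr a)/√2`. -/
theorem stmt1 {E F : Type*} [NormedAddCommGroup E] [InnerProductSpace ℂ E] [CompleteSpace E]
    [NormedAddCommGroup F] [InnerProductSpace ℂ F] [CompleteSpace F]
    {ιE ιF : Type*} (bE : HilbertBasis ιE ℂ E) (bF : HilbertBasis ιF ℂ F)
    (apos : E →L[ℂ] E) (aneg : F →L[ℂ] F) (t : F →L[ℂ] E)
    (hpos : apos.IsPositive) (hneg : aneg.IsPositive)
    (ha : (blockOp apos t (adjoint t) aneg).IsPositive)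
    (htrp : Summable fun i => (inner ℂ (bE i) (apos (bE i)) : ℂ).re)
    (htrn : Summable fun j => (inner ℂ (bF j) (aneg (bF j)) : ℂ).re)
    (ht : Summable fun j => ‖t (bF j)‖ ^ 2) :
    Real.sqrt (∑' j, ‖t (bF j)‖ ^ 2) ≤
      ((∑' i, (inner ℂ (bE i) (apos (bE i)) : ℂ).re) +
        ∑' j, (inner ℂ (bF j) (aneg (bF j)) : ℂ).re) / Real.sqrt 2 :=
  stmt1_general bE bF apos aneg t ha htrp htrn
end
end

section
/- Let H be a separable complex Hilbert space with orthogonal decomposition H = H₊ ⊕ H₋ into infinite-dimensional closed subspaces, with orthogonal projections p₊, p₋, and set d = i(p₊ − p₋). Then the set of unitaries u on H with u − 1 of finite rank is unbounded with respect to the restricted norm ‖a‖_res = ‖a‖ + ‖[d,a]‖₂. In particular, for every C > 0 there is a unitary u with u − 1 of finite rank and ‖u‖_res > C. -/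
open ContinuousLinearMap

noncomputable section

/-- `T` is a Hilbert–Schmidt operator: `∑ᵢ ‖T eᵢ‖² < ∞` for some Hilbert basis `(eᵢ)`. -/
def IsHS {H : Type*} [NormedAddCommGroup H] [InnerProductSpace ℂ H]
    (T : H →L[ℂ] H) : Prop :=
  ∃ (ι : Type) (b : HilbertBasis ι ℂ H), Summable fun i => ‖T (b i)‖ ^ 2

/-- `T` is trace class: `T` is a product of two Hilbert–Schmidt operators. -/
def IsTC {H : Type*} [NormedAddCommGroup H] [InnerProductSpace ℂ H]
    (T : H →L[ℂ] H) : Prop :=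
  ∃ A B : H →L[ℂ] H, IsHS A ∧ IsHS B ∧ T = A * B

/-- The operator `d = i(p₊ - p₋)` associated to the orthogonal projection `P = p₊`
(so `p₋ = 1 - P`). -/
def dOp {H : Type*} [NormedAddCommGroup H] [InnerProductSpace ℂ H]
    (P : H →L[ℂ] H) : H →L[ℂ] H :=
  Complex.I • (P - (1 - P))

open scoped InnerProductSpace

/-!
Choose orthonormal vectors `e₁, …, e_N` in `ran p₊` and `f₁, …, f_N` in `ran p₋`, and let
`u = 1 - 2q`, where `q` is the orthogonal projection onto the span of the `e_k + f_k`.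
This reflection is a self-adjoint unitary with `u - 1` of finite rank and `u f_k = -e_k`.
Since `d` is skew-adjoint, `[d, u]` is self-adjoint, and `[d, u] f_k = -2i e_k`; Bessel's
inequality for the `f_k` then gives `‖[d, u]‖₂² ≥ 4N`.
-/

theorem IsStarProjection.one_sub_two_mul_mem_unitary {R : Type*} [Ring R] [StarRing R] {p : R}
    (hp : IsStarProjection p) : 1 - 2 * p ∈ unitary R := by
  convert hp.one_sub.two_mul_sub_one_mem_unitary using 1
  noncomm_ring

theorem IsSelfAdjoint.commutator_of_star_eq_neg {R : Type*} [Ring R] [StarRing R] {d u : R}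
    (hd : star d = -d) (hu : IsSelfAdjoint u) : IsSelfAdjoint (d * u - u * d) := by
  simp only [IsSelfAdjoint, star_sub, star_mul, hd, hu.star_eq]
  noncomm_ring

theorem LinearMap.finiteDimensional_range_commutator {K V : Type*} [Field K] [AddCommGroup V]
    [Module K V] (a u : V →ₗ[K] V) [FiniteDimensional K (range (u - 1))] :
    FiniteDimensional K (range (a * u - u * a)) := by
  have hcomm : a * u - u * a = a * (u - 1) + -((u - 1) * a) := by noncomm_ring
  have : FiniteDimensional K (range (a * (u - 1))) := by
    rw [Module.End.mul_eq_comp, range_comp]; infer_instance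
  have : FiniteDimensional K (range ((u - 1) * a)) :=
    Submodule.finiteDimensional_of_le (range_comp_le_range _ _)
  have : FiniteDimensional K ↥(range (a * (u - 1)) ⊔ range (-((u - 1) * a)) : Submodule K V) := by
    rw [range_neg]; infer_instance
  rw [hcomm]
  exact Submodule.finiteDimensional_of_le (range_add_le _ _)

theorem LinearMap.apply_eq_zero_of_mem_range_one_sub {R V : Type*} [Ring R] [AddCommGroup V]
    [Module R V] {p : V →ₗ[R] V} (hp : IsIdempotentElem p) {x : V} (hx : x ∈ range (1 - p)) :
    p x = 0 := by
  rwa [← LinearMap.IsIdempotentElem.ker_eq_range_one_sub hp] at hx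

section HilbertSpace

variable {𝕜 : Type*} [RCLike 𝕜] {H : Type*} [NormedAddCommGroup H] [InnerProductSpace 𝕜 H]

theorem HilbertBasis.hasSum_norm_inner_sq_s4 {ι : Type*} (b : HilbertBasis ι 𝕜 H) (x : H) :
    HasSum (fun i => ‖⟪b i, x⟫_𝕜‖ ^ 2) (‖x‖ ^ 2) := by
  have h := (b.hasSum_inner_mul_inner x x).mapL (RCLike.reCLM (K := 𝕜))
  simp only [RCLike.reCLM_apply, ← inner_conj_symm x (b _), RCLike.conj_mul,
    inner_self_eq_norm_sq] at h
  exact_mod_cast h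

theorem exists_orthonormal_fin_mem_of_not_finiteDimensional (V : Submodule 𝕜 H)
    (hV : ¬ FiniteDimensional 𝕜 V) (N : ℕ) :
    ∃ e : Fin N → H, Orthonormal 𝕜 e ∧ ∀ k, e k ∈ V := by
  have hrank : (N : Cardinal) ≤ Module.rank 𝕜 V :=
    Cardinal.natCast_lt_aleph0.le.trans (not_lt.1 fun h => hV (Module.rank_lt_aleph0_iff.1 h))
  obtain ⟨v, hv⟩ := exists_linearIndependent_of_le_rank hrank
  exact ⟨V.subtypeₗᵢ ∘ InnerProductSpace.gramSchmidtNormed 𝕜 v,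
    (InnerProductSpace.gramSchmidtNormed_orthonormal hv).comp_linearIsometry _,
    fun k => (InnerProductSpace.gramSchmidtNormed 𝕜 v k).2⟩

variable [CompleteSpace H] {ι : Type*} (b : HilbertBasis ι 𝕜 H)

theorem summable_norm_apply_hilbertBasis_sq_of_finiteDimensional_range (T : H →L[𝕜] H)
    [FiniteDimensional 𝕜 (LinearMap.range (T : H →ₗ[𝕜] H))] :
    Summable fun i => ‖T (b i)‖ ^ 2 := by
  set R := LinearMap.range (T : H →ₗ[𝕜] H)
  let r := stdOrthonormalBasis 𝕜 R
  have hT : ∀ x, ‖T x‖ ^ 2 = ∑ j, ‖⟪adjoint T (r j), x⟫_𝕜‖ ^ 2 := fun x => by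
    have := r.sum_sq_norm_inner_right ⟨T x, x, rfl⟩
    simp only [Submodule.coe_inner, Submodule.coe_norm] at this
    simp only [← this, adjoint_inner_left]
  simp_rw [hT]
  exact summable_sum fun j _ => ((b.hasSum_norm_inner_sq_s4 _).summable.congr
    fun i => by rw [norm_inner_symm])

theorem sum_norm_adjoint_sq_le_tsum {κ : Type*} [Fintype κ] {f : κ → H} (hf : Orthonormal 𝕜 f)
    (T : H →L[𝕜] H) (hT : Summable fun i => ‖T (b i)‖ ^ 2) :
    ∑ k, ‖adjoint T (f k)‖ ^ 2 ≤ ∑' i, ‖T (b i)‖ ^ 2 := by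
  have hk : ∀ k, HasSum (fun i => ‖⟪f k, T (b i)⟫_𝕜‖ ^ 2) (‖adjoint T (f k)‖ ^ 2) := fun k =>
    (b.hasSum_norm_inner_sq_s4 _).congr_fun fun i => by
      rw [← adjoint_inner_left, norm_inner_symm]
  rw [← (hasSum_sum fun k _ => hk k).tsum_eq]
  exact Summable.tsum_le_tsum (fun i => hf.sum_inner_products_le (T (b i)))
    (summable_sum fun k _ => (hk k).summable) hT

theorem exists_unitary_apply_eq_neg_of_orthonormal {κ : Type*} [Fintype κ]
    {e f : κ → H} (he : Orthonormal 𝕜 e) (hf : Orthonormal 𝕜 f) (hef : ∀ j k, ⟪e j, f k⟫_𝕜 = 0) :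
    ∃ u ∈ unitary (H →L[𝕜] H), IsSelfAdjoint u ∧
      FiniteDimensional 𝕜 (LinearMap.range (u - 1 : H →ₗ[𝕜] H)) ∧ ∀ k, u (f k) = -e k := by
  set K := Submodule.span 𝕜 (Set.range (e + f))
  have : FiniteDimensional 𝕜 K := FiniteDimensional.span_of_finite 𝕜 (Set.finite_range _)
  set q := K.starProjection
  have hq := isStarProjection_starProjection (U := K)
  have hsum : ∀ k, q (e k + f k) = e k + f k := fun k =>
    Submodule.starProjection_eq_self_iff.2 (Submodule.subset_span ⟨k, rfl⟩)
  have hdiff : ∀ k, q (e k - f k) = 0 := fun k => by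
    refine K.starProjection_apply_eq_zero_iff.2 <|
      (Submodule.isOrtho_span.2 ?_).ge (Submodule.mem_span_singleton_self _)
    rintro _ ⟨j, rfl⟩ _ rfl
    have hfe : ⟪f j, e k⟫_𝕜 = 0 := by rw [← inner_conj_symm, hef, map_zero]
    classical
    simp only [Pi.add_apply, inner_add_left, inner_sub_right, hef, hfe, orthonormal_iff_ite.1 he,
      orthonormal_iff_ite.1 hf]
    ring
  refine ⟨1 - 2 * q, hq.one_sub_two_mul_mem_unitary, ?_, ?_, fun k => ?_⟩
  · rw [two_mul]; exact (IsSelfAdjoint.one _).sub (hq.isSelfAdjoint.add hq.isSelfAdjoint)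
  · refine Submodule.finiteDimensional_of_le (S₂ := K) ?_
    rintro _ ⟨x, rfl⟩
    simpa using K.nsmul_mem (K.starProjection_apply_mem x) 2
  · have h1 := hsum k
    have h2 := hdiff k
    rw [map_add] at h1
    rw [map_sub, sub_eq_zero] at h2
    calc (1 - 2 * q) (f k) = f k - (q (e k) + q (f k)) := by simp [two_mul, h2]
      _ = -e k := by rw [h1]; abel

end HilbertSpace

section dOp

variable {H : Type*} [NormedAddCommGroup H] [InnerProductSpace ℂ H] {P : H →L[ℂ] H}

theorem star_dOp [CompleteSpace H] (hP : IsSelfAdjoint P) : star (dOp P) = -dOp P := by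
  simp [dOp, star_smul, hP.star_eq]

theorem dOp_apply_of_apply_eq_self {x : H} (hx : P x = x) : dOp P x = Complex.I • x := by
  simp [dOp, hx]

theorem dOp_apply_of_apply_eq_zero {x : H} (hx : P x = 0) : dOp P x = -(Complex.I • x) := by
  simp [dOp, hx]

theorem norm_dOp_commutator_apply {u : H →L[ℂ] H} {x y : H} (hx : P x = x) (hy : P y = 0)
    (hu : u y = -x) : ‖(dOp P * u - u * dOp P) y‖ = 2 * ‖x‖ := by
  have : (dOp P * u - u * dOp P) y = (-2 * Complex.I) • x := by
    rw [sub_apply, mul_apply_eq_comp, mul_apply_eq_comp, hu, map_neg,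
      dOp_apply_of_apply_eq_self hx, dOp_apply_of_apply_eq_zero hy, map_neg, map_smul, hu]
    module
  simp [this, norm_smul]

end dOp

/-- The group of unitaries `u` with `u - 1` of finite rank is unbounded in the restricted norm
`‖u‖_res = ‖u‖ + ‖[d,u]‖₂`. -/
theorem stmt4 {H : Type*} [NormedAddCommGroup H] [InnerProductSpace ℂ H] [CompleteSpace H]
    (P : H →L[ℂ] H) (hP : IsSelfAdjoint P) (hP2 : P * P = P)
    (hinfp : ¬ FiniteDimensional ℂ (LinearMap.range (P : H →ₗ[ℂ] H)))
    (hinfm : ¬ FiniteDimensional ℂ (LinearMap.range ((1 - P : H →L[ℂ] H) : H →ₗ[ℂ] H)))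
    {ι : Type*} (b : HilbertBasis ι ℂ H) :
    ∀ C : ℝ, 0 < C → ∃ u : H →L[ℂ] H, u ∈ unitary (H →L[ℂ] H) ∧
      FiniteDimensional ℂ (LinearMap.range ((u - 1 : H →L[ℂ] H) : H →ₗ[ℂ] H)) ∧
      C < ‖u‖ + Real.sqrt (∑' i, ‖(dOp P * u - u * dOp P) (b i)‖ ^ 2) := by
  intro C hC
  obtain ⟨N, hN⟩ := exists_nat_gt (C ^ 2)
  obtain ⟨e, he, heP⟩ := exists_orthonormal_fin_mem_of_not_finiteDimensional _ hinfp N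
  obtain ⟨f, hf, hfP⟩ := exists_orthonormal_fin_mem_of_not_finiteDimensional _ hinfm N
  have hidem : IsIdempotentElem (P : H →ₗ[ℂ] H) := IsIdempotentElem.toLinearMap hP2
  have hPe k : P (e k) = e k := (LinearMap.IsIdempotentElem.mem_range_iff hidem).1 (heP k)
  have hPf k : P (f k) = 0 :=
    LinearMap.apply_eq_zero_of_mem_range_one_sub hidem (by simpa using hfP k)
  have hef j k : ⟪e j, f k⟫_ℂ = 0 := by
    simpa [hPe, hPf] using hP.isSymmetric (e j) (f k)
  obtain ⟨u, hu, hu_sa, hu_fin, hue⟩ := exists_unitary_apply_eq_neg_of_orthonormal he hf hef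
  set T := dOp P * u - u * dOp P
  have hT_fin : FiniteDimensional ℂ (LinearMap.range (T : H →ₗ[ℂ] H)) := by
    rw [show (T : H →ₗ[ℂ] H) = ↑(dOp P) * ↑u - ↑u * ↑(dOp P) by simp [T]]
    exact (dOp P : H →ₗ[ℂ] H).finiteDimensional_range_commutator u
  have hT_adj : adjoint T = T := by
    rw [← star_eq_adjoint]
    exact (IsSelfAdjoint.commutator_of_star_eq_neg (star_dOp hP) hu_sa).star_eq
  have h4N : 4 * (N : ℝ) ≤ ∑' i, ‖T (b i)‖ ^ 2 := calc
    4 * (N : ℝ) = ∑ k, ‖adjoint T (f k)‖ ^ 2 := by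
      simp only [hT_adj, T, norm_dOp_commutator_apply (hPe _) (hPf _) (hue _), he.1]
      norm_num [mul_comm]
    _ ≤ ∑' i, ‖T (b i)‖ ^ 2 := sum_norm_adjoint_sq_le_tsum b hf T
      (summable_norm_apply_hilbertBasis_sq_of_finiteDimensional_range b T)
  refine ⟨u, hu, hu_fin, ?_⟩
  have hsqrt : C < Real.sqrt (∑' i, ‖T (b i)‖ ^ 2) := (Real.lt_sqrt hC.le).2 (by linarith)
  linarith [norm_nonneg u]
end
end
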